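/- arXiv:2102.05776 — 5 statements merged into one kernel-verified Lean document; each statement's English description precedes it below -/
import Mathlib

section
/- Under the (P1') attack constraints, the score of any deterministic policy π under the poisoned reward R̂ satisfies ρ̂^π ≤ ρ̂^{π†}; moreover if π ≠ π† then ρ̂^π ≤ ρ̂^{π†} - ε†·(1-γ)·μ_min, where μ_min = min_{π,s} μ^π(s) — in particular π† is the unique optimal deterministic policy under R̂. -/
open scoped BigOperators

structure MDP (S A : Type) [Fintype S] [Fintype A] where
  P : S → A → S → ℝ
  σ : S → ℝ
  γ : ℝ
  P_nonneg : ∀ s a s', 0 ≤ P s a s'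
  P_sum : ∀ s a, ∑ s', P s a s' = 1
  σ_nonneg : ∀ s, 0 ≤ σ s
  σ_sum : ∑ s, σ s = 1
  γ_nonneg : 0 ≤ γ
  γ_lt_one : γ < 1

variable {S A : Type} [Fintype S] [Fintype A]

/-- A stochastic stationary policy: `π s a` is the probability of action `a` in state `s`. -/
def isPolicy (π : S → A → ℝ) : Prop :=
  (∀ s a, 0 ≤ π s a) ∧ ∀ s, ∑ a, π s a = 1

/-- `saDist M π t s a` is the probability that `(s_{t+1}, a_{t+1}) = (s, a)`
(time indexed from 1 in the paper, from 0 here) under policy `π`. -/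
def saDist (M : MDP S A) (π : S → A → ℝ) : ℕ → S → A → ℝ
  | 0 => fun s a => M.σ s * π s a
  | t + 1 => fun s a => (∑ s', ∑ a', saDist M π t s' a' * M.P s' a' s) * π s a

/-- Discounted state-action occupancy measure
`ψ^π(s,a) = E[(1-γ) Σ_{t≥1} γ^{t-1} 1{s_t=s, a_t=a}]`. -/
noncomputable def occ (M : MDP S A) (π : S → A → ℝ) (s : S) (a : A) : ℝ :=
  (1 - M.γ) * ∑' t : ℕ, M.γ ^ t * saDist M π t s a

/-- Inner product of two `|S|·|A|`-dimensional vectors. -/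
def dot (ψ R : S → A → ℝ) : ℝ := ∑ s, ∑ a, ψ s a * R s a

/-- The score `ρ^π = ⟨ψ^π, R⟩`. -/
noncomputable def score (M : MDP S A) (π : S → A → ℝ) (R : S → A → ℝ) : ℝ :=
  dot (occ M π) R

/-- `stDist M π t s` is the probability that `s_{t+1} = s`. -/
def stDist (M : MDP S A) (π : S → A → ℝ) : ℕ → S → ℝ
  | 0 => M.σ
  | t + 1 => fun s => ∑ s', ∑ a', stDist M π t s' * π s' a' * M.P s' a' s

/-- Discounted state occupancy measure `μ^π(s) = E[(1-γ) Σ_{t≥1} γ^{t-1} 1{s_t=s}]`. -/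
noncomputable def stateOcc (M : MDP S A) (π : S → A → ℝ) (s : S) : ℝ :=
  (1 - M.γ) * ∑' t : ℕ, M.γ ^ t * stDist M π t s

/-- The stochastic policy corresponding to a deterministic policy `d : S → A`. -/
def detPol [DecidableEq A] (d : S → A) : S → A → ℝ :=
  fun s a => if a = d s then 1 else 0

/-- The neighbor policy `π†{s;a}`, following `a ≠ π†(s)` in `s` and `π†` elsewhere. -/
def neighbor [DecidableEq S] (πd : S → A) (s : S) (a : A) : S → A :=
  fun s' => if s' = s then a else πd s'


/-!
Let `V` be the fixed point of the Bellman operator of `π†` (a `γ`-contraction) and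
`Q_V(s, a) = (1 - γ) R̂(s, a) + γ ∑ P(s, a, s') V(s')`. Integrating the discounted flow equation
of the state occupancy `μ^d` against `V` gives the performance-difference identity
`(1 - γ) (ρ̂^{π†} - ρ̂^d) = ∑ₛ μ^d(s) (Q_V(s, π†(s)) - Q_V(s, d(s)))`.
For a neighbor `π†{s;a}` only the term at `s` survives, so the attack constraint and
`0 < μ ≤ 1` force the action gap `Q_V(s, π†(s)) - Q_V(s, a)` to be at least `(1 - γ) ε†`.
Hence for any deterministic `d` every term of the identity is nonnegative, and a state where `d`
deviates from `π†` contributes at least `μ_min (1 - γ) ε†`.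
-/

open Finset

section StateOccupancy

variable {M : MDP S A} {π : S → A → ℝ}

lemma saDist_eq_stDist_mul : ∀ (t : ℕ) (s : S) (a : A),
    saDist M π t s a = stDist M π t s * π s a
  | 0, _, _ => rfl
  | t + 1, s, a => by
      simp only [saDist, stDist, saDist_eq_stDist_mul t]

lemma stDist_nonneg (hπ : isPolicy π) : ∀ (t : ℕ) (s : S), 0 ≤ stDist M π t s
  | 0, s => M.σ_nonneg s
  | t + 1, s => sum_nonneg fun s' _ => sum_nonneg fun a' _ =>
      mul_nonneg (mul_nonneg (stDist_nonneg hπ t s') (hπ.1 s' a')) (M.P_nonneg s' a' s)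

lemma sum_stDist_succ_mul (t : ℕ) (V : S → ℝ) :
    ∑ s, stDist M π (t + 1) s * V s
      = ∑ s, stDist M π t s * ∑ a, π s a * ∑ s', M.P s a s' * V s' := by
  simp only [stDist, sum_mul, mul_sum]
  rw [sum_comm]
  refine sum_congr rfl fun s _ => ?_
  rw [sum_comm]
  exact sum_congr rfl fun a _ => sum_congr rfl fun s' _ => by ring

lemma sum_stDist (hπ : isPolicy π) : ∀ t : ℕ, ∑ s, stDist M π t s = 1
  | 0 => M.σ_sum
  | t + 1 => by
      simpa [M.P_sum, hπ.2, sum_stDist hπ t] using sum_stDist_succ_mul (M := M) (π := π) t 1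

lemma stDist_le_one (hπ : isPolicy π) (t : ℕ) (s : S) : stDist M π t s ≤ 1 :=
  (single_le_sum (fun s' _ => stDist_nonneg hπ t s') (mem_univ s)).trans
    (sum_stDist hπ t).le

lemma summable_stDist (hπ : isPolicy π) (s : S) :
    Summable fun t => M.γ ^ t * stDist M π t s := by
  refine (summable_geometric_of_lt_one M.γ_nonneg M.γ_lt_one).of_nonneg_of_le
    (fun t => mul_nonneg (pow_nonneg M.γ_nonneg t) (stDist_nonneg hπ t s)) fun t => ?_
  exact mul_le_of_le_one_right (pow_nonneg M.γ_nonneg t) (stDist_le_one hπ t s)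

lemma stateOcc_le_one (hπ : isPolicy π) (s : S) : stateOcc M π s ≤ 1 := by
  have h1γ : 0 < 1 - M.γ := sub_pos.2 M.γ_lt_one
  have hgeom := summable_geometric_of_lt_one M.γ_nonneg M.γ_lt_one
  calc stateOcc M π s ≤ (1 - M.γ) * ∑' t : ℕ, M.γ ^ t := by
        refine mul_le_mul_of_nonneg_left ?_ h1γ.le
        exact (summable_stDist hπ s).tsum_le_tsum (fun t =>
          mul_le_of_le_one_right (pow_nonneg M.γ_nonneg t) (stDist_le_one hπ t s)) hgeom
    _ = 1 := by
        rw [tsum_geometric_of_lt_one M.γ_nonneg M.γ_lt_one, mul_inv_cancel₀ h1γ.ne']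

lemma occ_eq_stateOcc_mul (s : S) (a : A) : occ M π s a = stateOcc M π s * π s a := by
  simp only [occ, stateOcc, saDist_eq_stDist_mul, mul_assoc, ← tsum_mul_right]

lemma score_eq_sum_stateOcc (R : S → A → ℝ) :
    score M π R = ∑ s, stateOcc M π s * ∑ a, π s a * R s a := by
  simp only [score, dot, occ_eq_stateOcc_mul, mul_sum, mul_assoc]

lemma sum_stateOcc_mul (hπ : isPolicy π) (W : S → ℝ) :
    ∑ s, stateOcc M π s * W s = (1 - M.γ) * ∑' t, M.γ ^ t * ∑ s, stDist M π t s * W s := by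
  simp only [stateOcc, mul_assoc, ← tsum_mul_right, ← mul_sum]
  rw [← Summable.tsum_finsetSum fun s _ =>
    ((summable_stDist hπ s).mul_right (W s)).congr fun t => mul_assoc _ _ _]
  simp only [mul_sum]

/-- The discounted flow equation `μ = (1 - γ) σ + γ μ P_π`, integrated against `V`. -/
lemma sum_stateOcc_mul_flow (hπ : isPolicy π) (V : S → ℝ) :
    ∑ s, stateOcc M π s * V s
      = (1 - M.γ) * ∑ s, M.σ s * V s
        + M.γ * ∑ s, stateOcc M π s * ∑ a, π s a * ∑ s', M.P s a s' * V s' := by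
  have hsum : ∀ W : S → ℝ, Summable fun t => M.γ ^ t * ∑ s, stDist M π t s * W s := fun W => by
    simpa only [mul_sum, mul_assoc] using
      summable_sum fun s _ => (summable_stDist hπ s).mul_right (W s)
  have hshift : ∑' t, M.γ ^ (t + 1) * ∑ s, stDist M π (t + 1) s * V s
      = M.γ * ∑' t, M.γ ^ t * ∑ s, stDist M π t s * ∑ a, π s a * ∑ s', M.P s a s' * V s' := by
    rw [← tsum_mul_left]
    exact tsum_congr fun t => by rw [sum_stDist_succ_mul, pow_succ]; ring
  rw [sum_stateOcc_mul hπ, sum_stateOcc_mul hπ, (hsum V).tsum_eq_zero_add, hshift]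
  simp only [stDist, pow_zero, one_mul]
  ring

end StateOccupancy

section Deterministic

variable (M : MDP S A) (R : S → A → ℝ)

/-- Action values of a value function `V`, normalized by `1 - γ` like the score. -/
def qValue (V : S → ℝ) (s : S) (a : A) : ℝ :=
  (1 - M.γ) * R s a + M.γ * ∑ s', M.P s a s' * V s'

/-- The Bellman operator of `d` is a `γ`-contraction for the sup metric on `S → ℝ`. -/
lemma exists_eq_qValue (d : S → A) : ∃ V : S → ℝ, ∀ s, V s = qValue M R V s (d s) := by
  let T : (S → ℝ) → S → ℝ := fun V s => qValue M R V s (d s)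
  have hT : ContractingWith ⟨M.γ, M.γ_nonneg⟩ T := by
    refine ⟨M.γ_lt_one, LipschitzWith.of_dist_le_mul fun V W => ?_⟩
    refine (dist_pi_le_iff (mul_nonneg M.γ_nonneg dist_nonneg)).2 fun s => ?_
    have hP : ∑ s', M.P s (d s) s' * dist (V s') (W s') ≤ dist V W :=
      calc ∑ s', M.P s (d s) s' * dist (V s') (W s')
          ≤ ∑ s', M.P s (d s) s' * dist V W :=
            sum_le_sum fun s' _ => mul_le_mul_of_nonneg_left (dist_le_pi_dist V W s')
              (M.P_nonneg s (d s) s')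
        _ = dist V W := by rw [← sum_mul, M.P_sum, one_mul]
    calc dist (T V s) (T W s) = M.γ * |∑ s', M.P s (d s) s' * (V s' - W s')| := by
          simp only [T, qValue, Real.dist_eq, ← mul_sub, ← sum_sub_distrib, abs_mul,
            abs_of_nonneg M.γ_nonneg, add_sub_add_left_eq_sub]
      _ ≤ M.γ * dist V W := by
          refine mul_le_mul_of_nonneg_left ((abs_sum_le_sum_abs _ _).trans ?_) M.γ_nonneg
          simpa only [abs_mul, abs_of_nonneg (M.P_nonneg _ _ _), Real.dist_eq] using hP
  exact ⟨_, fun s => congrFun (hT.fixedPoint_isFixedPt (f := T)).symm s⟩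

variable [DecidableEq A]

omit [Fintype S] in
lemma sum_detPol_mul (d : S → A) (s : S) (f : A → ℝ) : ∑ a, detPol d s a * f a = f (d s) := by
  simp [detPol]

omit [Fintype S] in
lemma detPol_isPolicy (d : S → A) : isPolicy (detPol d) :=
  ⟨fun s a => by unfold detPol; split_ifs <;> norm_num,
    fun s => by simpa using sum_detPol_mul d s 1⟩

lemma score_detPol (d : S → A) :
    score M (detPol d) R = ∑ s, stateOcc M (detPol d) s * R s (d s) := by
  simp only [score_eq_sum_stateOcc, sum_detPol_mul]

lemma sum_stateOcc_mul_sub_qValue (d : S → A) (V : S → ℝ) :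
    ∑ s, stateOcc M (detPol d) s * (V s - qValue M R V s (d s))
      = (1 - M.γ) * (∑ s, M.σ s * V s - score M (detPol d) R) := by
  have hflow := sum_stateOcc_mul_flow (M := M) (detPol_isPolicy d) V
  simp only [sum_detPol_mul] at hflow
  simp only [qValue, mul_sub, mul_add, sum_sub_distrib, sum_add_distrib, score_detPol]
  simp only [mul_left_comm _ (1 - M.γ), mul_left_comm _ M.γ, ← mul_sum]
  linarith

lemma performance_difference (πt d : S → A) {V : S → ℝ}
    (hV : ∀ s, V s = qValue M R V s (πt s)) :
    (1 - M.γ) * (score M (detPol πt) R - score M (detPol d) R)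
      = ∑ s, stateOcc M (detPol d) s * (qValue M R V s (πt s) - qValue M R V s (d s)) := by
  have hσV : ∑ s, M.σ s * V s = score M (detPol πt) R := by
    have h := sum_stateOcc_mul_sub_qValue M R πt V
    simp only [← hV, sub_self, mul_zero, sum_const_zero] at h
    linarith [(mul_eq_zero.1 h.symm).resolve_left (sub_pos.2 M.γ_lt_one).ne']
  simp only [← hV, ← hσV, sum_stateOcc_mul_sub_qValue]

end Deterministic

lemma qValue_gap_of_neighbor [DecidableEq S] [DecidableEq A] {M : MDP S A} {R : S → A → ℝ}
    {πt : S → A} {V : S → ℝ} (hV : ∀ s, V s = qValue M R V s (πt s)) {s : S} {a : A}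
    {ε : ℝ} (hε : 0 ≤ ε) (hpos : 0 < stateOcc M (detPol (neighbor πt s a)) s)
    (hscore : score M (detPol πt) R ≥ score M (detPol (neighbor πt s a)) R + ε) :
    (1 - M.γ) * ε ≤ qValue M R V s (πt s) - qValue M R V s a := by
  have hpd := performance_difference M R πt (neighbor πt s a) hV
  rw [sum_eq_single s (fun s' _ hs' => by simp [neighbor, hs']) (by simp)] at hpd
  simp only [neighbor, if_pos] at hpd
  have hle : (1 - M.γ) * ε ≤ stateOcc M (detPol (neighbor πt s a)) s
      * (qValue M R V s (πt s) - qValue M R V s a) := by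
    rw [← hpd]
    exact mul_le_mul_of_nonneg_left (by linarith) (sub_pos.2 M.γ_lt_one).le
  have hgap : 0 ≤ qValue M R V s (πt s) - qValue M R V s a :=
    nonneg_of_mul_nonneg_right
      ((mul_nonneg (sub_pos.2 M.γ_lt_one).le hε).trans hle) hpos
  exact hle.trans (mul_le_of_le_one_left hgap (stateOcc_le_one (detPol_isPolicy _) s))

/-- under the (P1') attack constraints with margin ε† > 0, every
deterministic policy scores no better than π† under R̂, and every other deterministic
policy is worse by at least `ε†·(1-γ)·μ_min`; in particular π† is the unique optimal
deterministic policy under R̂. -/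
theorem target_uniquely_optimal [DecidableEq S] [DecidableEq A]
    (M : MDP S A) (πt : S → A) (Rhat : S → A → ℝ) (εt μmin : ℝ) (hεt : 0 < εt)
    (herg : ∀ π : S → A → ℝ, isPolicy π → ∀ s, 0 < stateOcc M π s)
    (hμ : ∀ π : S → A → ℝ, isPolicy π → ∀ s, μmin ≤ stateOcc M π s)
    (hatt : ∀ s a, a ≠ πt s →
      score M (detPol πt) Rhat ≥ score M (detPol (neighbor πt s a)) Rhat + εt) :
    ∀ d : S → A,
      score M (detPol d) Rhat ≤ score M (detPol πt) Rhat ∧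
      (d ≠ πt →
        score M (detPol d) Rhat
          ≤ score M (detPol πt) Rhat - εt * (1 - M.γ) * μmin) := by
  intro d
  have h1γ : 0 < 1 - M.γ := sub_pos.2 M.γ_lt_one
  obtain ⟨V, hV⟩ := exists_eq_qValue M Rhat πt
  have hgap : ∀ s, d s ≠ πt s →
      (1 - M.γ) * εt ≤ qValue M Rhat V s (πt s) - qValue M Rhat V s (d s) := fun s hs =>
    qValue_gap_of_neighbor hV hεt.le (herg _ (detPol_isPolicy _) s) (hatt s (d s) hs)
  have hterm : ∀ s ∈ univ, 0 ≤ stateOcc M (detPol d) s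
      * (qValue M Rhat V s (πt s) - qValue M Rhat V s (d s)) := fun s _ => by
    refine mul_nonneg (herg _ (detPol_isPolicy d) s).le ?_
    by_cases hs : d s = πt s
    · simp [hs]
    · exact (mul_pos h1γ hεt).le.trans (hgap s hs)
  have hpd := performance_difference M Rhat πt d hV
  have hle : score M (detPol d) Rhat ≤ score M (detPol πt) Rhat :=
    sub_nonneg.1 (nonneg_of_mul_nonneg_right (hpd ▸ sum_nonneg hterm) h1γ)
  refine ⟨hle, fun hne => ?_⟩
  obtain ⟨s₀, hs₀⟩ := Function.ne_iff.1 hne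
  rw [le_sub_comm]
  calc εt * (1 - M.γ) * μmin ≤ stateOcc M (detPol d) s₀ * ((1 - M.γ) * εt) := by
        linarith [mul_le_mul_of_nonneg_right (hμ _ (detPol_isPolicy d) s₀) (mul_pos h1γ hεt).le]
    _ ≤ stateOcc M (detPol d) s₀ * (qValue M Rhat V s₀ (πt s₀) - qValue M Rhat V s₀ (d s₀)) :=
        mul_le_mul_of_nonneg_left (hgap s₀ hs₀) (herg _ (detPol_isPolicy d) s₀).le
    _ ≤ (1 - M.γ) * (score M (detPol πt) Rhat - score M (detPol d) Rhat) :=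
        hpd ▸ single_le_sum hterm (mem_univ s₀)
    _ ≤ score M (detPol πt) Rhat - score M (detPol d) Rhat :=
        mul_le_of_le_one_left (sub_nonneg.2 hle) (by linarith [M.γ_nonneg])
end

section
/- Suppose R̄ = R̂ + Σ_{(s,a)∈Θ} α_{s,a}·(ψ^{π{s;a}} - ψ^{π†}) with α_{s,a} ≥ 0, and suppose the defense policy π_D satisfies Γ^{s;a}(π_D) ≥ Γ^{s;a}(π†) for all (s,a) ∈ Θ. Then ρ̄^{π_D} - ρ̄^{π†} ≥ ρ̂^{π_D} - ρ̂^{π†}, i.e., the defense's suboptimality relative to the target policy under the true reward is no worse than under the poisoned reward. -/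
open scoped BigOperators

/-- Inner product on ℝ^n. -/
def dotv {n : ℕ} (x y : Fin n → ℝ) : ℝ := ∑ j, x j * y j

lemma dotv_add_right {n : ℕ} (x y z : Fin n → ℝ) :
    dotv x (y + z) = dotv x y + dotv x z := by
  simp [dotv, mul_add, Finset.sum_add_distrib]

lemma dotv_sum_right {n : ℕ} {ι : Type} (Θ : Finset ι) (x : Fin n → ℝ)
    (f : ι → Fin n → ℝ) : dotv x (∑ i ∈ Θ, f i) = ∑ i ∈ Θ, dotv x (f i) := by
  unfold dotv
  rw [Finset.sum_comm]
  congr 1; ext j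
  rw [Finset.sum_apply, Finset.mul_sum]

lemma dotv_smul_right {n : ℕ} (c : ℝ) (x y : Fin n → ℝ) :
    dotv x (c • y) = c * dotv x y := by
  simp [dotv, Finset.mul_sum]
  exact Finset.sum_congr rfl fun i _ => by ring

lemma dotv_comm {n : ℕ} (x y : Fin n → ℝ) : dotv x y = dotv y x := by
  simp [dotv, mul_comm]

/-- if `Γ^{i}(π_D) ≥ Γ^{i}(π†)` for all tight constraints, the defense's
suboptimality w.r.t. `π†` under the true reward is no worse than under `R̂`. -/
theorem defense_gap_true_ge_poisoned {n : ℕ} {ι : Type} (Θ : Finset ι)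
    (ψt ψD Rhat Rbar : Fin n → ℝ) (ψn : ι → Fin n → ℝ) (α : ι → ℝ)
    (hα : ∀ i ∈ Θ, 0 ≤ α i)
    (hR : Rbar = Rhat + ∑ i ∈ Θ, α i • (ψn i - ψt))
    (hΓ : ∀ i ∈ Θ, dotv (ψn i - ψt) ψt ≤ dotv (ψn i - ψt) ψD) :
    dotv ψD Rbar - dotv ψt Rbar ≥ dotv ψD Rhat - dotv ψt Rhat := by
  subst hR
  rw [dotv_add_right, dotv_add_right, dotv_sum_right, dotv_sum_right]
  have key : ∑ i ∈ Θ, dotv ψt (α i • (ψn i - ψt)) ≤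
      ∑ i ∈ Θ, dotv ψD (α i • (ψn i - ψt)) := by
    apply Finset.sum_le_sum
    intro i hi
    rw [dotv_smul_right, dotv_smul_right, dotv_comm ψt, dotv_comm ψD]
    exact mul_le_mul_of_nonneg_left (hΓ i hi) (hα i hi)
  linarith
end

section
/- Suppose the defense policy π_D satisfies Γ^{s;a}(π_D) ≥ Γ^{s;a}(π†) for all (s,a) ∈ Θ^{ε†} and additionally ρ̂^{π_D} = ρ̂^{π†} (zero poisoned-score gap, Δ̂ = 0). If furthermore R̄ = R̂ + Σ α_{s,a}(ψ^{π{s;a}} - ψ^{π†}) with α ≥ 0, then ρ̄^{π_D} ≥ ρ̄^{π†}, i.e., the attack influence of the defense is no larger than that of the target policy: Δ^{π_D} ≤ Δ^{π†}. -/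
open scoped BigOperators

theorem dotv_eq_dotProduct {n : ℕ} (x y : Fin n → ℝ) : dotv x y = x ⬝ᵥ y := rfl

theorem dotProduct_sum_smul_le_dotProduct_sum_smul {m ι R : Type*} [Fintype m]
    [CommSemiring R] [PartialOrder R] [IsOrderedRing R] (Θ : Finset ι) (α : ι → R)
    (v : ι → m → R) (x y : m → R) (hα : ∀ i ∈ Θ, 0 ≤ α i)
    (hv : ∀ i ∈ Θ, x ⬝ᵥ v i ≤ y ⬝ᵥ v i) :
    x ⬝ᵥ ∑ i ∈ Θ, α i • v i ≤ y ⬝ᵥ ∑ i ∈ Θ, α i • v i := by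
  simp only [dotProduct_sum, dotProduct_smul, smul_eq_mul]
  exact Finset.sum_le_sum fun i hi => mul_le_mul_of_nonneg_left (hv i hi) (hα i hi)

/-- if `Γ^{i}(π_D) ≥ Γ^{i}(π†)` on the tight set and the poisoned-score
gap is zero, then `ρ̄^{π_D} ≥ ρ̄^{π†}`, i.e. `Δ^{π_D} ≤ Δ^{π†}`. -/
theorem defense_influence_le_target {n : ℕ} {ι : Type} (Θ : Finset ι)
    (ψt ψD ψstar Rhat Rbar : Fin n → ℝ) (ψn : ι → Fin n → ℝ) (α : ι → ℝ)
    (hα : ∀ i ∈ Θ, 0 ≤ α i)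
    (hR : Rbar = Rhat + ∑ i ∈ Θ, α i • (ψn i - ψt))
    (hΓ : ∀ i ∈ Θ, dotv (ψn i - ψt) ψt ≤ dotv (ψn i - ψt) ψD)
    (hgap : dotv ψD Rhat = dotv ψt Rhat) :
    dotv ψt Rbar ≤ dotv ψD Rbar ∧
      dotv ψstar Rbar - dotv ψD Rbar ≤ dotv ψstar Rbar - dotv ψt Rbar := by
  simp only [dotv_eq_dotProduct] at hΓ hgap ⊢
  have hsum : ψt ⬝ᵥ ∑ i ∈ Θ, α i • (ψn i - ψt) ≤ ψD ⬝ᵥ ∑ i ∈ Θ, α i • (ψn i - ψt) :=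
    dotProduct_sum_smul_le_dotProduct_sum_smul Θ α _ ψt ψD hα fun i hi => by
      simpa only [dotProduct_comm (ψn i - ψt)] using hΓ i hi
  have hmono : ψt ⬝ᵥ Rbar ≤ ψD ⬝ᵥ Rbar := by
    rw [hR, dotProduct_add, dotProduct_add, hgap]
    exact add_le_add_right hsum _
  exact ⟨hmono, sub_le_sub_left hmono _⟩
end

section
/- (Impossibility without the alignment condition, linear-algebraic core.) Suppose there exists (s₀,a₀) ∈ Θ with Γ^{s₀;a₀}(π_D) < Γ^{s₀;a₀}(π†). Then for any δ > 0, the reward function R̄_c := R̂ + c·(ψ^{π{s₀;a₀}} - ψ^{π†}) with coefficient c = δ / (Γ^{s₀;a₀}(π†) - Γ^{s₀;a₀}(π_D)) > 0 satisfies ⟨ψ^{π†}, R̄_c⟩ - ⟨ψ^{π_D}, R̄_c⟩ ≥ ⟨ψ^{π†}, R̂⟩ - ⟨ψ^{π_D}, R̂⟩ + δ. -/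
open scoped BigOperators

lemma dotv_add_smul {n : ℕ} (x y z : Fin n → ℝ) (c : ℝ) :
    dotv x (y + c • z) = dotv x y + c * dotv x z := by
  simp only [dotv, Pi.add_apply, Pi.smul_apply, smul_eq_mul]
  rw [Finset.mul_sum, ← Finset.sum_add_distrib]
  exact Finset.sum_congr rfl fun j _ => by ring

/-- if the alignment condition fails at some `(s₀,a₀) ∈ Θ`, then for any
`δ > 0` the reward `R̄_c = R̂ + c (ψ^{π{s₀;a₀}} - ψ^{π†})` with
`c = δ / (Γ^{s₀;a₀}(π†) - Γ^{s₀;a₀}(π_D))` makes the defense worse than the target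
by an extra margin `δ`. -/
theorem impossibility_without_alignment {n : ℕ} {ι : Type} (Θ : Finset ι) (i₀ : ι)
    (hi₀ : i₀ ∈ Θ) (ψt ψD Rhat : Fin n → ℝ) (ψn : ι → Fin n → ℝ)
    (hlt : dotv (ψn i₀ - ψt) ψD < dotv (ψn i₀ - ψt) ψt)
    (δ : ℝ) (hδ : 0 < δ) :
    0 < δ / (dotv (ψn i₀ - ψt) ψt - dotv (ψn i₀ - ψt) ψD) ∧
    dotv ψt (Rhat + (δ / (dotv (ψn i₀ - ψt) ψt - dotv (ψn i₀ - ψt) ψD)) •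
          (ψn i₀ - ψt))
        - dotv ψD (Rhat + (δ / (dotv (ψn i₀ - ψt) ψt - dotv (ψn i₀ - ψt) ψD)) •
          (ψn i₀ - ψt))
      ≥ dotv ψt Rhat - dotv ψD Rhat + δ := by
  set d := dotv (ψn i₀ - ψt) ψt - dotv (ψn i₀ - ψt) ψD with hd
  have hdpos : 0 < d := sub_pos.mpr hlt
  have hc : 0 < δ / d := div_pos hδ hdpos
  refine ⟨hc, ?_⟩
  rw [dotv_add_smul, dotv_add_smul, dotv_comm ψt (ψn i₀ - ψt), dotv_comm ψD (ψn i₀ - ψt)]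
  have : δ / d * dotv (ψn i₀ - ψt) ψt - δ / d * dotv (ψn i₀ - ψt) ψD = δ / d * d := by ring
  have h2 : δ / d * d = δ := div_mul_cancel₀ δ (ne_of_gt hdpos)
  nlinarith [this, h2]
end

section
/- Monotonicity of tight-constraint margins: if R̂ = A(R̄, π†, ε†) with R̄ ≠ R̂, then ε̂ := min_{s, a≠π†(s)} (ρ̂^{π†} - ρ̂^{π{s;a}}) = ε†, i.e., the minimal margin of the poisoned reward over neighbor policies is exactly the attack parameter. -/
open scoped BigOperators

variable {S A : Type} [Fintype S] [Fintype A]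

/-- Score of policy `π` for rewards given as Euclidean vectors over `S × A`. -/
noncomputable def scoreE (M : MDP S A) (π : S → A → ℝ)
    (R : EuclideanSpace ℝ (S × A)) : ℝ :=
  ∑ p : S × A, occ M π p.1 p.2 * R p

/-- Membership in the attack constraint set `C_ε`: π† beats every neighbor policy by
margin ε. -/
def inC [DecidableEq S] [DecidableEq A] (M : MDP S A) (πt : S → A) (ε : ℝ)
    (R : EuclideanSpace ℝ (S × A)) : Prop :=
  ∀ s a, a ≠ πt s →
    scoreE M (detPol πt) R ≥ scoreE M (detPol (neighbor πt s a)) R + ε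

/-- `isAttack M πt ε R' Rh` : `Rh = A(R', πt, ε)` is the Euclidean projection of
`R'` onto `C_ε`, i.e. the closest feasible reward to `R'`. -/
def isAttack [DecidableEq S] [DecidableEq A] (M : MDP S A) (πt : S → A) (ε : ℝ)
    (Rorig Rh : EuclideanSpace ℝ (S × A)) : Prop :=
  inC M πt ε Rh ∧ ∀ R₂, inC M πt ε R₂ → ‖Rh - Rorig‖ ≤ ‖R₂ - Rorig‖

lemma scoreE_comb (M : MDP S A) (π : S → A → ℝ)
    (x y : EuclideanSpace ℝ (S × A)) (c : ℝ) :
    scoreE M π (x + c • (y - x)) = scoreE M π x + c * (scoreE M π y - scoreE M π x) := by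
  simp only [scoreE]
  have h : ∀ p : S × A, occ M π p.1 p.2 * (x + c • (y - x)) p
      = occ M π p.1 p.2 * x p + c * (occ M π p.1 p.2 * y p - occ M π p.1 p.2 * x p) := by
    intro p
    simp only [PiLp.add_apply, PiLp.smul_apply, PiLp.sub_apply, smul_eq_mul]
    ring
  rw [Finset.sum_congr rfl (fun p _ => h p), Finset.sum_add_distrib, ← Finset.mul_sum,
    Finset.sum_sub_distrib]

/-- if `R̂ = A(R̄, π†, ε†)` with `R̄ ≠ R̂`, then the minimal margin of
the poisoned reward over the neighbor policies is exactly ε†. -/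
theorem tight_margin_eq_attack_param [DecidableEq S] [DecidableEq A]
    (M : MDP S A) (πt : S → A) (εt : ℝ)
    (Rbar Rhat : EuclideanSpace ℝ (S × A))
    (hatt : isAttack M πt εt Rbar Rhat) (hne : Rbar ≠ Rhat) :
    IsLeast {x : ℝ | ∃ s a, a ≠ πt s ∧
        x = scoreE M (detPol πt) Rhat
              - scoreE M (detPol (neighbor πt s a)) Rhat} εt := by
  classical
  constructor
  · -- membership: some constraint is tight
    by_contra hmem
    simp only [Set.mem_setOf_eq, not_exists] at hmem
    set mh : S × A → ℝ := fun c =>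
      scoreE M (detPol πt) Rhat - scoreE M (detPol (neighbor πt c.1 c.2)) Rhat with hmhdef
    set mb : S × A → ℝ := fun c =>
      scoreE M (detPol πt) Rbar - scoreE M (detPol (neighbor πt c.1 c.2)) Rbar with hmbdef
    have hstrict : ∀ c : S × A, c.2 ≠ πt c.1 → εt < mh c := by
      intro c hc
      have h1 := hatt.1 c.1 c.2 hc
      have h2 : εt ≠ mh c := fun h => hmem c.1 c.2 ⟨hc, h⟩
      have : εt ≤ mh c := by simp only [hmhdef]; linarith
      exact lt_of_le_of_ne this h2
    set T : Finset (S × A) := Finset.univ.filter (fun c : S × A => c.2 ≠ πt c.1) with hTdef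
    have hT : T.Nonempty := by
      by_contra hTe
      rw [Finset.not_nonempty_iff_eq_empty] at hTe
      have hRbarC : inC M πt εt Rbar := by
        intro s a ha
        exfalso
        have : (s, a) ∈ T := by simp [hTdef, ha]
        simp [hTe] at this
      have := hatt.2 Rbar hRbarC
      simp only [sub_self, norm_zero] at this
      have h0 : Rhat - Rbar = 0 := by
        have := norm_nonneg (Rhat - Rbar)
        have : ‖Rhat - Rbar‖ = 0 := le_antisymm ‹‖Rhat - Rbar‖ ≤ 0› this
        exact norm_eq_zero.mp this
      exact hne (sub_eq_zero.mp h0).symm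
    set D : S × A → ℝ := fun c =>
      if 0 < mh c - mb c then (mh c - εt) / (mh c - mb c) else 1 with hDdef
    have hDpos : ∀ c ∈ T, 0 < D c := by
      intro c hc
      have hc' : c.2 ≠ πt c.1 := by simpa [hTdef] using hc
      have := hstrict c hc'
      simp only [hDdef]
      split
      · exact div_pos (by linarith) (by assumption)
      · exact one_pos
    set θ : ℝ := min (T.inf' hT D) 1 with hθdef
    have hθpos : 0 < θ := lt_min ((Finset.lt_inf'_iff hT).mpr hDpos) one_pos
    have hθ1 : θ ≤ 1 := min_le_right _ _
    have hθD : ∀ c ∈ T, θ ≤ D c := fun c hc =>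
      le_trans (min_le_left _ _) (Finset.inf'_le D hc)
    set Rθ : EuclideanSpace ℝ (S × A) := Rhat + θ • (Rbar - Rhat) with hRθdef
    have hC : inC M πt εt Rθ := by
      intro s a ha
      have h1 := scoreE_comb M (detPol πt) Rhat Rbar θ
      have h2 := scoreE_comb M (detPol (neighbor πt s a)) Rhat Rbar θ
      have hcT : (s, a) ∈ T := by simp [hTdef, ha]
      have key : scoreE M (detPol πt) Rθ - scoreE M (detPol (neighbor πt s a)) Rθ
          = mh (s, a) + θ * (mb (s, a) - mh (s, a)) := by
        rw [hRθdef, h1, h2]; simp only [hmhdef, hmbdef]; ring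
      have hstr := hstrict (s, a) ha
      have hbound : εt ≤ mh (s, a) + θ * (mb (s, a) - mh (s, a)) := by
        by_cases hpos : 0 < mh (s, a) - mb (s, a)
        · have hD : θ ≤ (mh (s, a) - εt) / (mh (s, a) - mb (s, a)) := by
            have h := hθD (s, a) hcT
            simp only [hDdef] at h
            rwa [if_pos hpos] at h
          have := (le_div_iff₀ hpos).mp hD
          linarith
        · push_neg at hpos
          nlinarith
      linarith [key ▸ hbound]
    have hle := hatt.2 Rθ hC
    have hre : Rθ - Rbar = (1 - θ) • (Rhat - Rbar) := by
      simp only [hRθdef]; module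
    rw [hre, norm_smul, Real.norm_eq_abs, abs_of_nonneg (by linarith : (0:ℝ) ≤ 1 - θ)] at hle
    have hnorm : 0 < ‖Rhat - Rbar‖ := by
      rw [norm_pos_iff, sub_ne_zero]
      exact fun h => hne h.symm
    nlinarith
  · -- lower bound
    rintro x ⟨s, a, ha, rfl⟩
    have := hatt.1 s a ha
    linarith
end
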